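/- The anisotropic norm function ρ satisfies the triangle inequality: ρ(x + y) ≤ ρ(x) + ρ(y) for all x, y ∈ ℝ^n. -/

import Mathlib

/-!
For `0 < r ≤ s` we have `A_{s⁻¹} = A_{r/s} ∘ A_{r⁻¹}`, and since every `a_j ≥ 1` the dilation
`A_c` with `0 < c ≤ 1` shrinks the Euclidean norm at least by the factor `c`. With
`s = ρ(x) + ρ(y)` this gives `|A_{s⁻¹}(x + y)| ≤ ρ(x)/s + ρ(y)/s = 1`, and the same contraction
shows that `|A_{s⁻¹} z| ≤ 1` forces `ρ(z) ≤ s`.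
-/

open MeasureTheory Real Complex
open scoped FourierTransform ENNReal

noncomputable section

/-- The anisotropic dilation `A_t x = (t^{a_1} x_1, …, t^{a_n} x_n)`. -/
def dil (n : ℕ) (a : Fin n → ℝ) (t : ℝ) (x : EuclideanSpace ℝ (Fin n)) :
    EuclideanSpace ℝ (Fin n) :=
  WithLp.toLp 2 (fun j => t ^ a j * x j)

theorem EuclideanSpace.norm_le_norm_of_forall_norm_le {𝕜 ι : Type*} [RCLike 𝕜] [Fintype ι]
    {x y : EuclideanSpace 𝕜 ι} (h : ∀ i, ‖x i‖ ≤ ‖y i‖) : ‖x‖ ≤ ‖y‖ := by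
  rw [EuclideanSpace.norm_eq, EuclideanSpace.norm_eq]
  gcongr with i
  exact h i

section Dilation

variable {n : ℕ} {a : Fin n → ℝ}

theorem dil_add (t : ℝ) (x y : EuclideanSpace ℝ (Fin n)) :
    dil n a t (x + y) = dil n a t x + dil n a t y := by
  ext j
  simp [dil, mul_add]

theorem dil_dil {t u : ℝ} (ht : 0 ≤ t) (hu : 0 ≤ u) (x : EuclideanSpace ℝ (Fin n)) :
    dil n a t (dil n a u x) = dil n a (t * u) x := by
  ext j
  simp [dil, Real.mul_rpow ht hu, mul_assoc]

theorem norm_dil_le (ha : ∀ j, 1 ≤ a j) {c : ℝ} (hc₀ : 0 ≤ c) (hc₁ : c ≤ 1)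
    (x : EuclideanSpace ℝ (Fin n)) : ‖dil n a c x‖ ≤ c * ‖x‖ := by
  rw [← abs_of_nonneg hc₀, ← Real.norm_eq_abs, ← norm_smul]
  refine EuclideanSpace.norm_le_norm_of_forall_norm_le fun j => ?_
  simp only [dil, PiLp.toLp_apply, PiLp.smul_apply, smul_eq_mul, norm_mul, Real.norm_eq_abs,
    abs_of_nonneg hc₀, abs_of_nonneg (Real.rpow_nonneg hc₀ _)]
  gcongr
  exact Real.rpow_le_self_of_le_one hc₀ hc₁ (ha j)

theorem norm_dil_inv_le (ha : ∀ j, 1 ≤ a j) {r s : ℝ} (hr : 0 < r) (hrs : r ≤ s)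
    (x : EuclideanSpace ℝ (Fin n)) : ‖dil n a s⁻¹ x‖ ≤ r / s * ‖dil n a r⁻¹ x‖ := by
  have hs : 0 < s := hr.trans_le hrs
  have hdecomp : dil n a s⁻¹ x = dil n a (r / s) (dil n a r⁻¹ x) := by
    rw [dil_dil (by positivity) (by positivity)]
    congr 1
    field_simp
  rw [hdecomp]
  exact norm_dil_le ha (by positivity) ((div_le_one hs).mpr hrs) _

theorem norm_dil_inv_add_le (ha : ∀ j, 1 ≤ a j) {r r' : ℝ} (hr : 0 < r) (hr' : 0 < r')
    (x y : EuclideanSpace ℝ (Fin n)) :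
    ‖dil n a (r + r')⁻¹ (x + y)‖ ≤
      r / (r + r') * ‖dil n a r⁻¹ x‖ + r' / (r + r') * ‖dil n a r'⁻¹ y‖ := by
  rw [dil_add]
  exact (norm_add_le _ _).trans <| add_le_add
    (norm_dil_inv_le ha hr (by linarith) x) (norm_dil_inv_le ha hr' (by linarith) y)

theorem le_of_norm_dil_inv_le_one (ha : ∀ j, 1 ≤ a j) {t s : ℝ}
    {z : EuclideanSpace ℝ (Fin n)} (ht : 0 < t) (hz : ‖dil n a t⁻¹ z‖ = 1) (hs : 0 < s)
    (hsz : ‖dil n a s⁻¹ z‖ ≤ 1) : t ≤ s := by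
  by_contra! hst
  have : 1 ≤ s / t := calc
    1 = ‖dil n a t⁻¹ z‖ := hz.symm
    _ ≤ s / t * ‖dil n a s⁻¹ z‖ := norm_dil_inv_le ha hs hst.le z
    _ ≤ s / t := mul_le_of_le_one_right (by positivity) hsz
  rw [one_le_div ht] at this
  linarith

end Dilation

theorem stmt_2_general (n : ℕ) (a : Fin n → ℝ) (ha : ∀ j, 1 ≤ a j)
    (ρ : EuclideanSpace ℝ (Fin n) → ℝ)
    (hρ0 : ρ 0 = 0)
    (hρ : ∀ x : EuclideanSpace ℝ (Fin n), x ≠ 0 →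
      0 < ρ x ∧ ‖dil n a (ρ x)⁻¹ x‖ = 1)
    (x y : EuclideanSpace ℝ (Fin n)) :
    ρ (x + y) ≤ ρ x + ρ y := by
  rcases eq_or_ne x 0 with rfl | hx
  · simp [hρ0]
  rcases eq_or_ne y 0 with rfl | hy
  · simp [hρ0]
  obtain ⟨hρx, hx1⟩ := hρ x hx
  obtain ⟨hρy, hy1⟩ := hρ y hy
  rcases eq_or_ne (x + y) 0 with hxy | hxy
  · rw [hxy, hρ0]
    positivity
  obtain ⟨hρxy, hxy1⟩ := hρ _ hxy
  refine le_of_norm_dil_inv_le_one ha hρxy hxy1 (by positivity) ?_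
  calc ‖dil n a (ρ x + ρ y)⁻¹ (x + y)‖
      ≤ ρ x / (ρ x + ρ y) * ‖dil n a (ρ x)⁻¹ x‖ + ρ y / (ρ x + ρ y) * ‖dil n a (ρ y)⁻¹ y‖ :=
        norm_dil_inv_add_le ha hρx hρy x y
    _ = 1 := by
      rw [hx1, hy1]
      field_simp

/-- the triangle inequality for the anisotropic norm ρ. -/
theorem stmt_2 (n : ℕ) (a : Fin n → ℝ) (ha : ∀ j, 1 ≤ a j)
    (ρ : EuclideanSpace ℝ (Fin n) → ℝ)
    (hρ0 : ρ 0 = 0)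
    (hρ : ∀ x : EuclideanSpace ℝ (Fin n), x ≠ 0 →
      0 < ρ x ∧ ‖dil n a (ρ x)⁻¹ x‖ = 1)
    (huniq : ∀ x : EuclideanSpace ℝ (Fin n), x ≠ 0 →
      ∀ t : ℝ, 0 < t → ‖dil n a t⁻¹ x‖ = 1 → t = ρ x)
    (x y : EuclideanSpace ℝ (Fin n)) :
    ρ (x + y) ≤ ρ x + ρ y :=
  stmt_2_general n a ha ρ hρ0 hρ x y
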